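/- Let A be an n×m real matrix with no zero rows and no zero columns, and let k : Fin n → ℕ₊ and l : Fin m → ℕ₊. Let A' be the split matrix of A with multiplicities k and l: the matrix with rows indexed by pairs (i,s), i ∈ Fin n, s ∈ Fin k_i, columns indexed by pairs (j,t), j ∈ Fin m, t ∈ Fin l_j, and entry A'((i,s),(j,t)) = a_{ij}/(k_i·l_j). Then ‖A'‖_{∞→1} = ‖A‖_{∞→1}, where ‖·‖_{∞→1} denotes the infinity-to-one norm. -/

import Mathlib

open scoped BigOperators

/-- The ℓ²→ℓ² operator norm of a real matrix. -/
noncomputable def l2OpNorm {α β : Type*} [Fintype α] [Fintype β] [DecidableEq β]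
    (A : Matrix α β ℝ) : ℝ :=
  ‖LinearMap.toContinuousLinearMap (Matrix.toEuclideanLin A)‖

/-- The ∞→1 norm of a real matrix: `max_{x ∈ {-1,1}ⁿ, y ∈ {-1,1}^m} xᵀ A y`. -/
noncomputable def normInftyOne {α β : Type*} [Fintype α] [Fintype β] (A : Matrix α β ℝ) : ℝ :=
  ⨆ p : (α → Bool) × (β → Bool),
    ∑ i, ∑ j, (if p.1 i then (1:ℝ) else -1) * A i j * (if p.2 j then (1:ℝ) else -1)

/-- The Grothendieck norm: sup over `k` and families of unit vectors of `Σ a_{ij} ⟨p_i, q_j⟩`. -/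
noncomputable def grothendieckNorm {α β : Type*} [Fintype α] [Fintype β]
    (A : Matrix α β ℝ) : ℝ :=
  sSup { r : ℝ | ∃ (k : ℕ) (p : α → EuclideanSpace ℝ (Fin k)) (q : β → EuclideanSpace ℝ (Fin k)),
    (∀ i, ‖p i‖ = 1) ∧ (∀ j, ‖q j‖ = 1) ∧
    r = ∑ i, ∑ j, A i j * (inner ℝ (p i) (q j) : ℝ) }

/-- The matrix obtained from `A` by splitting row `i` into `k i` equal rows and
column `j` into `l j` equal columns. -/
noncomputable def splitMatrix {n m : ℕ} (A : Matrix (Fin n) (Fin m) ℝ)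
    (k : Fin n → ℕ+) (l : Fin m → ℕ+) :
    Matrix ((i : Fin n) × Fin (k i : ℕ)) ((j : Fin m) × Fin (l j : ℕ)) ℝ :=
  fun p q => A p.1 q.1 / (((k p.1 : ℕ) : ℝ) * ((l q.1 : ℕ) : ℝ))

/-!
Averaging a sign vector of the split matrix over each block of split rows (columns) turns its
bilinear form into the bilinear form of `A` evaluated at vectors in the cube `[-1, 1]`, and a
bilinear form attains its maximum over the cube at sign vectors; this gives `≤`. Conversely, sign
vectors that are constant on blocks average to arbitrary sign vectors, which gives `≥`.
-/

open Matrix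

section SignVectors

variable {α β : Type*}

def signVec (b : α → Bool) : α → ℝ := fun i => if b i then 1 else -1

lemma abs_signVec_le (b : α → Bool) (i : α) : |signVec b i| ≤ 1 := by
  unfold signVec; split_ifs <;> simp

variable [Fintype α] [Fintype β]

lemma normInftyOne_eq_iSup_dotProduct (A : Matrix α β ℝ) :
    normInftyOne A = ⨆ p : (α → Bool) × (β → Bool), signVec p.1 ⬝ᵥ (A *ᵥ signVec p.2) := by
  simp only [normInftyOne, signVec, dotProduct, mulVec, Finset.mul_sum, mul_assoc]

lemma normInftyOne_le {A : Matrix α β ℝ} {c : ℝ}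
    (h : ∀ b b', signVec b ⬝ᵥ (A *ᵥ signVec b') ≤ c) : normInftyOne A ≤ c := by
  rw [normInftyOne_eq_iSup_dotProduct]
  exact ciSup_le fun p => h p.1 p.2

lemma dotProduct_le_signVec_dotProduct {u : α → ℝ} (hu : ∀ i, |u i| ≤ 1) (c : α → ℝ) :
    u ⬝ᵥ c ≤ signVec (fun i => decide (0 ≤ c i)) ⬝ᵥ c := by
  refine Finset.sum_le_sum fun i _ => ?_
  have hsign : signVec (fun i => decide (0 ≤ c i)) i * c i = |c i| := by
    unfold signVec
    split_ifs with h
    · simp_all [abs_of_nonneg]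
    · simp_all [abs_of_neg (not_le.mp (by simpa using h))]
  calc u i * c i ≤ |u i| * |c i| := by rw [← abs_mul]; exact le_abs_self _
    _ ≤ 1 * |c i| := by gcongr; exact hu i
    _ = _ := by rw [one_mul, hsign]

/-- The bilinear form is affine in each variable separately, so its maximum over the cube is
attained at sign vectors: first fix the signs of `u`, then those of `v`. -/
lemma dotProduct_mulVec_le_normInftyOne (A : Matrix α β ℝ) {u : α → ℝ} {v : β → ℝ}
    (hu : ∀ i, |u i| ≤ 1) (hv : ∀ j, |v j| ≤ 1) : u ⬝ᵥ (A *ᵥ v) ≤ normInftyOne A := by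
  set ε := fun i => decide (0 ≤ (A *ᵥ v) i)
  set δ := fun j => decide (0 ≤ (signVec ε ᵥ* A) j)
  have hbdd : BddAbove (Set.range fun p : (α → Bool) × (β → Bool) =>
      signVec p.1 ⬝ᵥ (A *ᵥ signVec p.2)) := (Set.finite_range _).bddAbove
  calc u ⬝ᵥ (A *ᵥ v) ≤ signVec ε ⬝ᵥ (A *ᵥ v) := dotProduct_le_signVec_dotProduct hu _
    _ = v ⬝ᵥ (signVec ε ᵥ* A) := by rw [dotProduct_mulVec, dotProduct_comm]
    _ ≤ signVec δ ⬝ᵥ (signVec ε ᵥ* A) := dotProduct_le_signVec_dotProduct hv _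
    _ = signVec ε ⬝ᵥ (A *ᵥ signVec δ) := by rw [dotProduct_mulVec, dotProduct_comm]
    _ ≤ normInftyOne A := by
      rw [normInftyOne_eq_iSup_dotProduct]; exact le_ciSup hbdd (ε, δ)

end SignVectors

section BlockAverage

variable {ι : Type*} (k : ι → ℕ+)

noncomputable def blockAvg (x : (Σ i, Fin (k i : ℕ)) → ℝ) (i : ι) : ℝ :=
  (∑ s, x ⟨i, s⟩) / (k i : ℕ)

lemma abs_blockAvg_le {x : (Σ i, Fin (k i : ℕ)) → ℝ} (hx : ∀ p, |x p| ≤ 1) (i : ι) :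
    |blockAvg k x i| ≤ 1 := by
  have hk : (0 : ℝ) < (k i : ℕ) := by exact_mod_cast (k i).pos
  rw [blockAvg, abs_div, abs_of_pos hk, div_le_one hk]
  calc |∑ s, x ⟨i, s⟩| ≤ ∑ s, |x ⟨i, s⟩| := Finset.abs_sum_le_sum_abs _ _
    _ ≤ ∑ _s : Fin (k i : ℕ), (1 : ℝ) := Finset.sum_le_sum fun s _ => hx _
    _ = (k i : ℕ) := by simp

lemma blockAvg_comp_fst (x : ι → ℝ) : blockAvg k (fun p => x p.1) = x := by
  ext i
  have hk : ((k i : ℕ) : ℝ) ≠ 0 := by exact_mod_cast (k i).ne_zero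
  simp [blockAvg, hk]

end BlockAverage

lemma dotProduct_splitMatrix_mulVec {n m : ℕ} (A : Matrix (Fin n) (Fin m) ℝ)
    (k : Fin n → ℕ+) (l : Fin m → ℕ+) (x : (Σ i, Fin (k i : ℕ)) → ℝ)
    (y : (Σ j, Fin (l j : ℕ)) → ℝ) :
    x ⬝ᵥ (splitMatrix A k l *ᵥ y) = blockAvg k x ⬝ᵥ (A *ᵥ blockAvg l y) := by
  simp only [dotProduct, mulVec, splitMatrix, blockAvg, Fintype.sum_sigma, Finset.sum_div,
    Finset.mul_sum, Finset.sum_mul]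
  refine Finset.sum_congr rfl fun i _ => ?_
  rw [Finset.sum_comm]
  refine Finset.sum_congr rfl fun j _ => ?_
  rw [Finset.sum_comm]
  refine Finset.sum_congr rfl fun t _ => Finset.sum_congr rfl fun s _ => ?_
  ring

theorem normInftyOne_splitMatrix (n m : ℕ) (A : Matrix (Fin n) (Fin m) ℝ)
    (k : Fin n → ℕ+) (l : Fin m → ℕ+) :
    normInftyOne (splitMatrix A k l) = normInftyOne A := by
  apply le_antisymm
  · refine normInftyOne_le fun b b' => ?_
    rw [dotProduct_splitMatrix_mulVec]
    exact dotProduct_mulVec_le_normInftyOne A (abs_blockAvg_le k (abs_signVec_le b))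
      (abs_blockAvg_le l (abs_signVec_le b'))
  · refine normInftyOne_le fun b b' => ?_
    rw [← blockAvg_comp_fst k (signVec b), ← blockAvg_comp_fst l (signVec b'),
      ← dotProduct_splitMatrix_mulVec]
    exact dotProduct_mulVec_le_normInftyOne _ (fun _ => abs_signVec_le b _)
      (fun _ => abs_signVec_le b' _)
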